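/- arXiv:0907.3535 — 3 statements merged into one kernel-verified Lean document; each statement's English description precedes it below -/
import Mathlib

section
/- Let R be a ring acting on a module M, let π ∈ R be an idempotent (π∘π = π) and γ ∈ R an element such that n := π − γ is nilpotent. Let S ⊆ M be a subset with S ⊆ ker(γ) (i.e. γ·s = 0 for all s ∈ S) and such that n·S ⊆ S. Then π·s = 0 for all s ∈ S. -/
/-! Write `π = n + γ` with `n := π - γ`. On a set `S` that is stable under `n` and killed by `γ`,
the powers of `π` act as the powers of `n`, so `π • s = π ^ (N + 1) • s = n ^ (N + 1) • s = 0`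
as soon as `n ^ N = 0`. -/

section

variable {R M : Type*}

theorem pow_smul_mem_of_forall_smul_mem [Monoid R] [MulAction R M] {a : R} {S : Set M}
    (hS : ∀ s ∈ S, a • s ∈ S) {s : M} (hs : s ∈ S) (k : ℕ) : a ^ k • s ∈ S := by
  induction k with
  | zero => simpa using hs
  | succ k ih => simpa only [pow_succ', mul_smul] using hS _ ih

theorem add_pow_smul_eq_pow_smul [Semiring R] [AddCommMonoid M] [Module R M] {a b : R}
    {S : Set M} (hSa : ∀ s ∈ S, a • s ∈ S) (hSb : ∀ s ∈ S, b • s = 0) {s : M} (hs : s ∈ S)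
    (k : ℕ) : (a + b) ^ k • s = a ^ k • s := by
  induction k with
  | zero => simp only [pow_zero]
  | succ k ih =>
    rw [pow_succ', mul_smul, ih, add_smul, hSb _ (pow_smul_mem_of_forall_smul_mem hSa hs k),
      add_zero, ← mul_smul, ← pow_succ']

end

theorem stmt1 {R M : Type*} [Ring R] [AddCommGroup M] [Module R M]
    (p g : R) (hp : p * p = p) (hn : IsNilpotent (p - g))
    (S : Set M) (hSg : ∀ s ∈ S, g • s = 0)
    (hSn : ∀ s ∈ S, (p - g) • s ∈ S) :
    ∀ s ∈ S, p • s = 0 := by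
  obtain ⟨N, hN⟩ := hn
  intro s hs
  calc p • s = p ^ (N + 1) • s := by rw [IsIdempotentElem.pow_succ_eq N hp]
    _ = ((p - g) + g) ^ (N + 1) • s := by rw [sub_add_cancel]
    _ = (p - g) ^ (N + 1) • s := add_pow_smul_eq_pow_smul hSn hSg hs (N + 1)
    _ = 0 := by rw [pow_succ, hN, zero_mul, zero_smul]
end

section
/- Let V be a finite-dimensional complex vector space with a hermitian form H, and suppose V = V₁ ⊕ ⋯ ⊕ V_k is an H-orthogonal decomposition such that H restricted to each V_i is either positive definite or negative definite. Let S ⊆ V be a subspace such that S = ⊕_i p_i(S), where p_i : V → V_i is the projection along the decomposition. Then the restriction of H to S is nondegenerate. -/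
/-!
Write `x = ∑ pᵢ x`. If `x ∈ S` pairs to zero with all of `S`, then in particular it pairs to zero
with each `pᵢ x ∈ S`; by orthogonality of the pieces `H x (pᵢ x) = H (pᵢ x) (pᵢ x)`, and
definiteness of `H` on `Vᵢ` forces `pᵢ x = 0`. Hence `x = 0`.
-/

lemma sum_proj_apply_eq_self {ι R V : Type*} [Fintype ι] [Semiring R] [AddCommMonoid V]
    [Module R V] {W : ι → Submodule R V} {p : ι → V →ₗ[R] V} (hp_id : ∀ i, ∀ v ∈ W i, p i v = v)
    (hp_zero : ∀ i j, i ≠ j → ∀ v ∈ W j, p i v = 0) (hspan : ⨆ i, W i = ⊤) (v : V) :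
    ∑ i, p i v = v := by
  have hv : v ∈ ⨆ i, W i := hspan ▸ Submodule.mem_top
  induction hv using Submodule.iSup_induction' with
  | mem i w hw =>
    rw [Finset.sum_eq_single_of_mem i (Finset.mem_univ i) fun j _ hj => hp_zero j i hj w hw]
    exact hp_id i w hw
  | zero => simp
  | add x y _ _ hx hy => simp only [map_add, Finset.sum_add_distrib, hx, hy]

lemma apply_proj_eq_proj_apply_proj {ι R V M : Type*} [Fintype ι] [CommSemiring R]
    [AddCommMonoid V] [Module R V] [AddCommMonoid M] [Module R M] {σ : R →+* R}
    {W : ι → Submodule R V} {p : ι → V →ₗ[R] V} (H : V →ₛₗ[σ] V →ₗ[R] M)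
    (hsum : ∀ v, ∑ i, p i v = v) (hp_mem : ∀ i v, p i v ∈ W i)
    (horth : ∀ i j, i ≠ j → ∀ x ∈ W i, ∀ y ∈ W j, H x y = 0) (x : V) (i : ι) :
    H x (p i x) = H (p i x) (p i x) := by
  calc H x (p i x) = H (∑ j, p j x) (p i x) := by rw [hsum]
    _ = H (p i x) (p i x) := by
      rw [map_sum, LinearMap.sum_apply]
      exact Finset.sum_eq_single_of_mem i (Finset.mem_univ i)
        fun j _ hj => horth j i hj _ (hp_mem j x) _ (hp_mem i x)

lemma eq_zero_of_definite {V : Type*} [Zero V] {W : Set V} {q : V → ℝ}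
    (hdef : (∀ x ∈ W, x ≠ 0 → 0 < q x) ∨ (∀ x ∈ W, x ≠ 0 → q x < 0)) {x : V} (hx : x ∈ W)
    (hq : q x = 0) : x = 0 := by
  by_contra hne
  rcases hdef with hpos | hneg
  · exact (hpos x hx hne).ne' hq
  · exact (hneg x hx hne).ne hq

theorem stmt9_general {V : Type*} [AddCommGroup V] [Module ℂ V]
    (H : V →ₗ⋆[ℂ] V →ₗ[ℂ] ℂ)
    {k : ℕ} (Vsub : Fin k → Submodule ℂ V)
    (p : Fin k → (V →ₗ[ℂ] V))
    (hp_mem : ∀ i (v : V), p i v ∈ Vsub i)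
    (hp_id : ∀ i, ∀ v ∈ Vsub i, p i v = v)
    (hp_zero : ∀ i j, i ≠ j → ∀ v ∈ Vsub j, p i v = 0)
    (hspan : (⨆ i, Vsub i) = ⊤)
    (horth : ∀ i j, i ≠ j → ∀ x ∈ Vsub i, ∀ y ∈ Vsub j, H x y = 0)
    (hdef : ∀ i, (∀ x ∈ Vsub i, x ≠ 0 → 0 < (H x x).re) ∨
      (∀ x ∈ Vsub i, x ≠ 0 → (H x x).re < 0))
    (S : Submodule ℂ V)
    (hS : S = ⨆ i, Submodule.map (p i) S) :
    ∀ x ∈ S, (∀ y ∈ S, H x y = 0) → x = 0 := by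
  intro x hx hxS
  have hsum := sum_proj_apply_eq_self hp_id hp_zero hspan
  have hproj_mem (i : Fin k) : p i x ∈ S :=
    hS ▸ Submodule.mem_iSup_of_mem i (Submodule.mem_map_of_mem hx)
  have hproj_zero (i : Fin k) : p i x = 0 := by
    refine eq_zero_of_definite (W := Vsub i) (q := fun y => (H y y).re) (hdef i) (hp_mem i x) ?_
    rw [← apply_proj_eq_proj_apply_proj H hsum hp_mem horth, hxS _ (hproj_mem i), Complex.zero_re]
  rw [← hsum x]
  exact Finset.sum_eq_zero fun i _ => hproj_zero i

theorem stmt9 {V : Type*} [AddCommGroup V] [Module ℂ V] [FiniteDimensional ℂ V]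
    (H : V →ₗ⋆[ℂ] V →ₗ[ℂ] ℂ)
    (hHerm : ∀ x y, starRingEnd ℂ (H x y) = H y x)
    {k : ℕ} (Vsub : Fin k → Submodule ℂ V)
    (p : Fin k → (V →ₗ[ℂ] V))
    (hp_mem : ∀ i (v : V), p i v ∈ Vsub i)
    (hp_id : ∀ i, ∀ v ∈ Vsub i, p i v = v)
    (hp_zero : ∀ i j, i ≠ j → ∀ v ∈ Vsub j, p i v = 0)
    (hspan : (⨆ i, Vsub i) = ⊤)
    (horth : ∀ i j, i ≠ j → ∀ x ∈ Vsub i, ∀ y ∈ Vsub j, H x y = 0)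
    (hdef : ∀ i, (∀ x ∈ Vsub i, x ≠ 0 → 0 < (H x x).re) ∨
      (∀ x ∈ Vsub i, x ≠ 0 → (H x x).re < 0))
    (S : Submodule ℂ V)
    (hS : S = ⨆ i, Submodule.map (p i) S) :
    ∀ x ∈ S, (∀ y ∈ S, H x y = 0) → x = 0 :=
  stmt9_general H Vsub p hp_mem hp_id hp_zero hspan horth hdef S hS
end

section
/- Let R be a ring acting on an abelian group M, let e, e′ ∈ R be idempotents with e − e′ lying in a nilpotent two-sided ideal I of R, and suppose the subgroup S := ker(e′ : M → M) satisfies r·S ⊆ S for every r ∈ I. Then ker(e : M → M) = ker(e′ : M → M). -/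
/-!
Write `n = e - e'`, which is nilpotent, so that `1 - n` and `1 + n` are units and `n • x = x`
forces `x = 0`. If `e' • m = 0`, then `x = e • m = n • m` lies in `ker e'` by stability, so
`x = e • x = n • x` and `x = 0`. Conversely, if `e • m = 0`, then `m - e' • m ∈ ker e' ⊆ ker e`
gives `e • (e' • m) = 0`, so `y = e' • m` satisfies `y = e' • y = -n • y`, and `y = 0`.
-/

theorem isNilpotent_of_forall_list_prod_eq_zero {R : Type*} [Monoid R] [Zero R] {S : Set R}
    (hS : ∃ N : ℕ, ∀ l : List R, l.length = N → (∀ x ∈ l, x ∈ S) → l.prod = 0)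
    {x : R} (hx : x ∈ S) : IsNilpotent x := by
  obtain ⟨N, hN⟩ := hS
  refine ⟨N, ?_⟩
  rw [← List.prod_replicate]
  exact hN _ List.length_replicate fun y hy => List.eq_of_mem_replicate hy ▸ hx

section

variable {R M : Type*} [Ring R] [AddCommGroup M] [Module R M]

theorem eq_zero_of_smul_eq_self_of_isNilpotent {c : R} (hc : IsNilpotent c) {x : M}
    (hx : c • x = x) : x = 0 := by
  rw [← hc.isUnit_one_sub.smul_eq_zero, sub_smul, one_smul, hx, sub_self]

theorem smul_eq_zero_of_isNilpotent_sub_of_smul_eq_zero {e e' : R} (he : IsIdempotentElem e)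
    (hn : IsNilpotent (e - e')) (hstab : ∀ m : M, e' • m = 0 → e' • ((e - e') • m) = 0)
    {m : M} (hm : e' • m = 0) : e • m = 0 := by
  have hx : e • m = (e - e') • m := by rw [sub_smul, hm, sub_zero]
  have he'x : e' • e • m = 0 := hx ▸ hstab m hm
  refine eq_zero_of_smul_eq_self_of_isNilpotent hn ?_
  rw [sub_smul, he'x, sub_zero, smul_smul, he.eq]

theorem smul_eq_zero_of_isNilpotent_sub_of_ker_le {e e' : R} (he' : IsIdempotentElem e')
    (hn : IsNilpotent (e - e')) (hle : ∀ m : M, e' • m = 0 → e • m = 0)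
    {m : M} (hm : e • m = 0) : e' • m = 0 := by
  have he'y : e' • e' • m = e' • m := by rw [smul_smul, he'.eq]
  have hey : e • e' • m = 0 := by
    have := hle (m - e' • m) (by rw [smul_sub, he'y, sub_self])
    rwa [smul_sub, hm, zero_sub, neg_eq_zero] at this
  refine eq_zero_of_smul_eq_self_of_isNilpotent hn.neg ?_
  rw [neg_smul, sub_smul, hey, he'y, zero_sub, neg_neg]

end

theorem stmt15 {R M : Type*} [Ring R] [AddCommGroup M] [Module R M]
    (I : TwoSidedIdeal R)
    (hI : ∃ N : ℕ, ∀ l : List R, l.length = N → (∀ x ∈ l, x ∈ I) → l.prod = 0)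
    (e e' : R) (he : e * e = e) (he' : e' * e' = e') (hdiff : e - e' ∈ I)
    (hstab : ∀ r ∈ I, ∀ m : M, e' • m = 0 → e' • (r • m) = 0) :
    ∀ m : M, e • m = 0 ↔ e' • m = 0 := by
  have hn : IsNilpotent (e - e') := isNilpotent_of_forall_list_prod_eq_zero (S := I) hI hdiff
  have hle : ∀ m : M, e' • m = 0 → e • m = 0 := fun m =>
    smul_eq_zero_of_isNilpotent_sub_of_smul_eq_zero he hn (hstab _ hdiff)
  exact fun m => ⟨smul_eq_zero_of_isNilpotent_sub_of_ker_le he' hn hle, hle m⟩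
end
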